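/- Let H be a hypergraph, S, B ⊆ V(H) and x ∈ S. Let H_1 := H \ H(x) and H_2 := H \ (H(B) ∩ H(x)). Then ({{x}} ⊗ btr_B(H_1, S \ {x})) \ btr_B(H, S)(x) = {{x}} ⊗ btr_{B ∪ {x}}(H_2, S \ {x}). -/
import Mathlib


variable {α : Type*} [DecidableEq α]

/-- The vertex set `V(H)` of a hypergraph `H`: the union of its hyperedges. -/
def verts (H : Finset (Finset α)) : Finset α := H.sup id

/-- `H(S)`: the set of hyperedges of `H` meeting `S`. -/
def edgesMeeting (H : Finset (Finset α)) (S : Finset α) : Finset (Finset α) :=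
  H.filter fun e => (e ∩ S).Nonempty

/-- `T` is a transversal of `H`: `T ⊆ V(H)` and `T` meets every hyperedge. -/
def IsTransversal (H : Finset (Finset α)) (T : Finset α) : Prop :=
  T ⊆ verts H ∧ ∀ e ∈ H, (T ∩ e).Nonempty

/-- `tr H`: the set of transversals of `H`. -/
def tr (H : Finset (Finset α)) : Finset (Finset α) :=
  (verts H).powerset.filter fun T => ∀ e ∈ H, (T ∩ e).Nonempty

/-- `mtr H`: the set of minimal transversals of `H`. -/
def mtr (H : Finset (Finset α)) : Finset (Finset α) :=
  (tr H).filter fun T => ∀ x ∈ T, T.erase x ∉ tr H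

/-- `T` is a `B`-blocked transversal of `H'`: a transversal of `H'` such that every `x ∈ T`
has a private hyperedge in `H' \ H'(B)`. -/
def IsBlockedTr (B : Finset α) (H' : Finset (Finset α)) (T : Finset α) : Prop :=
  IsTransversal H' T ∧ ∀ x ∈ T, ∃ e ∈ H' \ edgesMeeting H' B, e ∩ T = {x}

/-- `btr_B(H')`: the set of `B`-blocked transversals of `H'`. -/
def btr (B : Finset α) (H' : Finset (Finset α)) : Finset (Finset α) :=
  (tr H').filter fun T => ∀ x ∈ T, ∃ e ∈ H' \ edgesMeeting H' B, e ∩ T = {x}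

/-- `btr_B(H', S)`: the `B`-blocked transversals of `H'` included in `S`. -/
def btrS (B : Finset α) (H' : Finset (Finset α)) (S : Finset α) : Finset (Finset α) :=
  (btr B H').filter fun T => T ⊆ S

/-- `A₁ ⊗ A₂`: empty if one of them is empty, and otherwise the set of unions `T₁ ∪ T₂`
with `T₁ ∈ A₁` and `T₂ ∈ A₂`. -/
def otimes (A₁ A₂ : Finset (Finset α)) : Finset (Finset α) :=
  (A₁ ×ˢ A₂).image fun p => p.1 ∪ p.2

lemma mem_btrS' {B : Finset α} {H' : Finset (Finset α)} {S T : Finset α} :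
    T ∈ btrS B H' S ↔
      ((T ⊆ verts H' ∧ ∀ e ∈ H', (T ∩ e).Nonempty) ∧
        ∀ y ∈ T, ∃ e, (e ∈ H' ∧ e ∉ edgesMeeting H' B) ∧ e ∩ T = {y}) ∧ T ⊆ S := by
  simp [btrS, btr, tr, Finset.mem_filter, Finset.mem_powerset]

lemma mem_otimes_singleton {s W : Finset α} {A : Finset (Finset α)} :
    W ∈ otimes {s} A ↔ ∃ T ∈ A, s ∪ T = W := by simp [otimes]

lemma mem_verts' {y : α} {H : Finset (Finset α)} : y ∈ verts H ↔ ∃ e ∈ H, y ∈ e := by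
  simp [verts, Finset.mem_sup]

lemma verts_mono {H₁ H₂ : Finset (Finset α)} (h : H₁ ⊆ H₂) : verts H₁ ⊆ verts H₂ :=
  Finset.le_iff_subset.mp (Finset.sup_mono h)

lemma mem_edgesMeeting' {H : Finset (Finset α)} {B e : Finset α}
    (he : e ∈ H) (h : (e ∩ B).Nonempty) : e ∈ edgesMeeting H B :=
  Finset.mem_filter.mpr ⟨he, h⟩

lemma notMem_edgesMeeting {H : Finset (Finset α)} {B e : Finset α}
    (h : ¬ (e ∩ B).Nonempty) : e ∉ edgesMeeting H B := by
  simp only [edgesMeeting, Finset.mem_filter, not_and]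
  exact fun _ => h

/-- **Lemma 6.** With `H₁ := H \ H(x)` and `H₂ := H \ (H(B) ∩ H(x))`,
`({{x}} ⊗ btr_B(H₁, S \ {x})) \ btr_B(H, S)(x) = {{x}} ⊗ btr_{B ∪ {x}}(H₂, S \ {x})`. -/
theorem otimes_sdiff_btrS_eq (H : Finset (Finset α)) (S B : Finset α)
    (hS : S ⊆ verts H) (hB : B ⊆ verts H) (x : α) (hx : x ∈ S) :
    otimes {({x} : Finset α)} (btrS B (H \ edgesMeeting H {x}) (S \ {x})) \
        ((btrS B H S).filter fun T => x ∈ T) =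
      otimes {({x} : Finset α)}
        (btrS (B ∪ {x}) (H \ (edgesMeeting H B ∩ edgesMeeting H {x})) (S \ {x})) := by
  have hmem1 : ∀ e : Finset α, e ∈ H \ edgesMeeting H {x} ↔ e ∈ H ∧ x ∉ e := by
    intro e
    simp [edgesMeeting, Finset.mem_sdiff, Finset.mem_filter, Finset.Nonempty]
    tauto
  have hmem2 : ∀ e : Finset α,
      e ∈ H \ (edgesMeeting H B ∩ edgesMeeting H {x}) ↔
        e ∈ H ∧ ¬((e ∩ B).Nonempty ∧ x ∈ e) := by
    intro e
    simp only [Finset.mem_sdiff, Finset.mem_inter, edgesMeeting, Finset.mem_filter]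
    constructor
    · rintro ⟨h1, h2⟩
      refine ⟨h1, fun ⟨hb, hxe⟩ => h2 ⟨⟨h1, hb⟩, h1, ⟨x, by simp [hxe]⟩⟩⟩
    · rintro ⟨h1, h2⟩
      refine ⟨h1, fun ⟨⟨_, hb⟩, _, hne⟩ => h2 ⟨hb, ?_⟩⟩
      obtain ⟨y, hy⟩ := hne
      simp only [Finset.mem_inter, Finset.mem_singleton] at hy
      exact hy.2 ▸ hy.1
  have h12 : H \ edgesMeeting H {x} ⊆ H \ (edgesMeeting H B ∩ edgesMeeting H {x}) := by
    intro e he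
    rw [hmem1] at he
    exact (hmem2 e).mpr ⟨he.1, fun h => he.2 h.2⟩
  ext W
  simp only [Finset.mem_sdiff, mem_otimes_singleton, Finset.mem_filter]
  constructor
  · rintro ⟨⟨T, hT, rfl⟩, hnot⟩
    obtain ⟨⟨⟨hTv, hTtr⟩, hTblock⟩, hTS⟩ := mem_btrS'.mp hT
    have hxT : x ∉ T := fun h => (Finset.mem_sdiff.mp (hTS h)).2 (Finset.mem_singleton_self x)
    -- promoted private edge for y ∈ T, in H w.r.t. B, and in H₂ w.r.t. B ∪ {x}
    have hpromote : ∀ y ∈ T, ∃ e, (e ∈ H ∧ x ∉ e ∧ e ∉ edgesMeeting H B ∧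
        ¬(e ∩ B).Nonempty) ∧ e ∩ T = {y} := by
      intro y hy
      obtain ⟨e, ⟨heH1, heB⟩, hpriv⟩ := hTblock y hy
      have h1 := (hmem1 e).mp heH1
      have hnB : ¬(e ∩ B).Nonempty := by
        intro h
        exact heB (mem_edgesMeeting' heH1 h)
      exact ⟨e, ⟨h1.1, h1.2, notMem_edgesMeeting hnB, hnB⟩, hpriv⟩
    refine ⟨T, mem_btrS'.mpr ⟨⟨⟨?_, ?_⟩, ?_⟩, hTS⟩, rfl⟩
    · exact hTv.trans (verts_mono h12)
    · intro e he
      rw [hmem2] at he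
      by_cases hxe : x ∈ e
      · have heB : ¬(e ∩ B).Nonempty := fun h => he.2 ⟨h, hxe⟩
        by_contra hempty
        apply hnot
        have hcap : e ∩ ({x} ∪ T) = {x} := by
          rw [Finset.inter_union_distrib_left,
            Finset.inter_singleton_of_mem hxe,
            Finset.inter_comm e T, Finset.not_nonempty_iff_eq_empty.mp hempty,
            Finset.union_empty]
        refine ⟨mem_btrS'.mpr ⟨⟨⟨?_, ?_⟩, ?_⟩, ?_⟩,
          Finset.mem_union_left _ (Finset.mem_singleton_self x)⟩
        · exact Finset.union_subset (Finset.singleton_subset_iff.mpr (hS hx))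
            (hTv.trans (verts_mono Finset.sdiff_subset))
        · intro f hf
          by_cases hxf : x ∈ f
          · exact ⟨x, Finset.mem_inter.mpr ⟨Finset.mem_union_left _ (Finset.mem_singleton_self x), hxf⟩⟩
          · obtain ⟨y, hy⟩ := hTtr f ((hmem1 f).mpr ⟨hf, hxf⟩)
            rw [Finset.mem_inter] at hy
            exact ⟨y, Finset.mem_inter.mpr ⟨Finset.mem_union_right _ hy.1, hy.2⟩⟩
        · intro y hy
          rcases Finset.mem_union.mp hy with hy | hy
          · rw [Finset.mem_singleton] at hy
            subst hy
            exact ⟨e, ⟨he.1, notMem_edgesMeeting heB⟩, hcap⟩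
          · obtain ⟨f, ⟨hfH, hfx, hfB, _⟩, hfpriv⟩ := hpromote y hy
            refine ⟨f, ⟨hfH, hfB⟩, ?_⟩
            rw [Finset.inter_union_distrib_left,
              Finset.inter_singleton_of_notMem hfx, hfpriv, Finset.empty_union]
        · exact Finset.union_subset (Finset.singleton_subset_iff.mpr hx)
            (hTS.trans Finset.sdiff_subset)
      · exact hTtr e ((hmem1 e).mpr ⟨he.1, hxe⟩)
    · intro y hy
      obtain ⟨e, ⟨heH, hxe, _, hnB⟩, hpriv⟩ := hpromote y hy
      refine ⟨e, ⟨(hmem2 e).mpr ⟨heH, fun h => hxe h.2⟩, notMem_edgesMeeting ?_⟩, hpriv⟩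
      rw [Finset.inter_union_distrib_left]
      simp [Finset.not_nonempty_iff_eq_empty.mp hnB,
        Finset.inter_singleton_of_notMem hxe]
  · rintro ⟨T, hT, rfl⟩
    obtain ⟨⟨⟨hTv, hTtr⟩, hTblock⟩, hTS⟩ := mem_btrS'.mp hT
    have hxT : x ∉ T := fun h => (Finset.mem_sdiff.mp (hTS h)).2 (Finset.mem_singleton_self x)
    have hkey : ∀ y ∈ T, ∃ e, (e ∈ H ∧ x ∉ e ∧ ¬(e ∩ B).Nonempty) ∧ e ∩ T = {y} := by
      intro y hy
      obtain ⟨e, ⟨heH2, heB⟩, hpriv⟩ := hTblock y hy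
      have hnBx : ¬(e ∩ (B ∪ {x})).Nonempty := by
        intro h
        exact heB (mem_edgesMeeting' heH2 h)
      have hxe : x ∉ e := fun h => hnBx ⟨x, Finset.mem_inter.mpr ⟨h, Finset.mem_union_right _ (Finset.mem_singleton_self x)⟩⟩
      have hnB : ¬(e ∩ B).Nonempty := fun ⟨y, hy⟩ => hnBx ⟨y, by
        rw [Finset.mem_inter] at hy ⊢
        exact ⟨hy.1, Finset.mem_union_left _ hy.2⟩⟩
      exact ⟨e, ⟨((hmem2 e).mp heH2).1, hxe, hnB⟩, hpriv⟩
    refine ⟨⟨T, mem_btrS'.mpr ⟨⟨⟨?_, ?_⟩, ?_⟩, hTS⟩, rfl⟩, ?_⟩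
    · intro y hy
      obtain ⟨e, ⟨heH, hxe, _⟩, hpriv⟩ := hkey y hy
      have : y ∈ e := by
        have : y ∈ e ∩ T := by rw [hpriv]; exact Finset.mem_singleton_self y
        exact (Finset.mem_inter.mp this).1
      exact mem_verts'.mpr ⟨e, (hmem1 e).mpr ⟨heH, hxe⟩, this⟩
    · exact fun e he => hTtr e (h12 he)
    · intro y hy
      obtain ⟨e, ⟨heH, hxe, hnB⟩, hpriv⟩ := hkey y hy
      exact ⟨e, ⟨(hmem1 e).mpr ⟨heH, hxe⟩, notMem_edgesMeeting hnB⟩, hpriv⟩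
    · rintro ⟨hmem, -⟩
      obtain ⟨e, ⟨heH, heB⟩, hpriv⟩ :=
        (mem_btrS'.mp hmem).1.2 x (Finset.mem_union_left _ (Finset.mem_singleton_self x))
      have hxe : x ∈ e := by
        have : x ∈ e ∩ ({x} ∪ T) := by rw [hpriv]; exact Finset.mem_singleton_self x
        exact (Finset.mem_inter.mp this).1
      have hnB : ¬(e ∩ B).Nonempty := by
        intro h
        exact heB (mem_edgesMeeting' heH h)
      obtain ⟨y, hy⟩ := hTtr e ((hmem2 e).mpr ⟨heH, fun h => hnB h.1⟩)
      rw [Finset.mem_inter] at hy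
      have : y ∈ e ∩ ({x} ∪ T) := Finset.mem_inter.mpr ⟨hy.2, Finset.mem_union_right _ hy.1⟩
      rw [hpriv, Finset.mem_singleton] at this
      exact hxT (this ▸ hy.1)
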